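/- Let τ be in the upper half-plane ℍ and r, s ∈ ℝ. Then: (1) if r + sτ ∉ Λ_τ, then Z_{r,s}(τ + 1) = Z_{r+s, s}(τ); (2) if −s + rτ ∉ Λ_τ, then Z_{r,s}(−1/τ) = τ · Z_{−s, r}(τ). (In particular the Hecke function transforms like a modular form of weight one under SL(2, ℤ), with the index (r, s) transformed accordingly.) -/

import Mathlib

noncomputable section

/-- The lattice point `m ω₁ + n ω₂` attached to an integer pair. -/
def latPt (ω₁ ω₂ : ℂ) (p : ℤ × ℤ) : ℂ := p.1 * ω₁ + p.2 * ω₂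

/-- Membership in the lattice `Λ = ℤω₁ + ℤω₂`. -/
def IsLatticePt (ω₁ ω₂ z : ℂ) : Prop := ∃ m n : ℤ, z = m * ω₁ + n * ω₂

/-- The Weierstrass `℘`-function of the lattice `ℤω₁ + ℤω₂`. -/
def wp (ω₁ ω₂ : ℂ) (z : ℂ) : ℂ :=
  1 / z ^ 2 + ∑' p : {p : ℤ × ℤ // p ≠ 0},
    (1 / (z - latPt ω₁ ω₂ p.1) ^ 2 - 1 / (latPt ω₁ ω₂ p.1) ^ 2)

/-- The Weierstrass `ζ`-function of the lattice `ℤω₁ + ℤω₂`. -/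
def wzeta (ω₁ ω₂ : ℂ) (z : ℂ) : ℂ :=
  1 / z + ∑' p : {p : ℤ × ℤ // p ≠ 0},
    (1 / (z - latPt ω₁ ω₂ p.1) + 1 / latPt ω₁ ω₂ p.1 + z / (latPt ω₁ ω₂ p.1) ^ 2)

/-- The derivative `℘'` of the Weierstrass `℘`-function. -/
def wpDeriv (ω₁ ω₂ : ℂ) : ℂ → ℂ := deriv (wp ω₁ ω₂)

/-- The quasi-period `η₁(τ) = 2ζ(1/2)` of the lattice `Λ_τ = ℤ + ℤτ`. -/
def eta1 (τ : ℂ) : ℂ := 2 * wzeta 1 τ (1 / 2)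

/-- The quasi-period `η₂(τ) = 2ζ(τ/2)` of the lattice `Λ_τ = ℤ + ℤτ`. -/
def eta2 (τ : ℂ) : ℂ := 2 * wzeta 1 τ (τ / 2)

/-- The Hecke function `Z_{r,s}(τ) = ζ(r + sτ; Λ_τ) − r η₁(τ) − s η₂(τ)`. -/
def heckeZ (r s : ℝ) (τ : ℂ) : ℂ :=
  wzeta 1 τ ((r : ℂ) + (s : ℂ) * τ) - (r : ℂ) * eta1 τ - (s : ℂ) * eta2 τ


/-!
Reindexing the defining series by a change of lattice basis, combined with the rescaling
`ζ(cz; cΛ) = c⁻¹ ζ(z; Λ)`, gives `ζ(z; Λ_{τ+1}) = ζ(z; Λ_τ)`, `ζ(z; Λ_{-1/τ}) = τ ζ(τz; Λ_τ)` and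
the oddness of `ζ`; this settles `τ ↦ -1/τ`. For `τ ↦ τ + 1` one also needs
`η₂(τ + 1) = η₁(τ) + η₂(τ)`, i.e. additivity of `ω ↦ 2ζ(ω/2)` on the lattice, which follows from
quasi-periodicity `ζ(z + ω) = ζ(z) + 2ζ(ω/2)`. For the latter, write `ζ(z + ω) - ζ(z)` as one
absolutely convergent series: it depends on `z` only through `z · Σ (ω'⁻² - (ω' - ω)⁻²)`, and this
sum vanishes under the symmetry `ω' ↦ ω - ω'`. So the difference is constant, and its value at
`z = -ω/2` is `2ζ(ω/2)` by oddness.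
-/

open Filter

def wzetaTerm (ω₁ ω₂ z : ℂ) (p : ℤ × ℤ) : ℂ :=
  1 / (z - latPt ω₁ ω₂ p) + 1 / latPt ω₁ ω₂ p + z / latPt ω₁ ω₂ p ^ 2

lemma wzeta_eq_add_tsum (ω₁ ω₂ z : ℂ) :
    wzeta ω₁ ω₂ z = 1 / z + ∑' p : {p : ℤ × ℤ // p ≠ 0}, wzetaTerm ω₁ ω₂ z p :=
  rfl

lemma wzetaTerm_zero (ω₁ ω₂ z : ℂ) : wzetaTerm ω₁ ω₂ z 0 = 1 / z := by
  simp [wzetaTerm, latPt]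

lemma latPt_sub (ω₁ ω₂ : ℂ) (p q : ℤ × ℤ) :
    latPt ω₁ ω₂ (p - q) = latPt ω₁ ω₂ p - latPt ω₁ ω₂ q := by
  simp only [latPt, Prod.fst_sub, Prod.snd_sub, Int.cast_sub]
  ring

lemma latPt_add (ω₁ ω₂ : ℂ) (p q : ℤ × ℤ) :
    latPt ω₁ ω₂ (p + q) = latPt ω₁ ω₂ p + latPt ω₁ ω₂ q := by
  simp only [latPt, Prod.fst_add, Prod.snd_add, Int.cast_add]
  ring

lemma latPt_neg (ω₁ ω₂ : ℂ) (p : ℤ × ℤ) : latPt ω₁ ω₂ (-p) = -latPt ω₁ ω₂ p := by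
  simp only [latPt, Prod.fst_neg, Prod.snd_neg, Int.cast_neg]
  ring

lemma wzeta_eq_mul_wzeta_mul {ω₁ ω₂ ω₁' ω₂' c : ℂ} (hc : c ≠ 0) (e : ℤ × ℤ ≃+ ℤ × ℤ)
    (he : ∀ p, c * latPt ω₁' ω₂' p = latPt ω₁ ω₂ (e p)) (z : ℂ) :
    wzeta ω₁' ω₂' z = c * wzeta ω₁ ω₂ (c * z) := by
  let e₀ : {p : ℤ × ℤ // p ≠ 0} ≃ {p : ℤ × ℤ // p ≠ 0} :=
    e.toEquiv.subtypeEquiv fun _ ↦ e.map_ne_zero_iff.symm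
  rw [wzeta_eq_add_tsum, wzeta_eq_add_tsum, ← e₀.tsum_eq fun p ↦ wzetaTerm ω₁ ω₂ (c * z) p,
    mul_add, ← tsum_mul_left]
  congr 1
  · field_simp
  -- the termwise identity also holds at the poles, where both sides read `1 / 0 = 0`
  refine tsum_congr fun p ↦ ?_
  have hp : latPt ω₁' ω₂' p = c⁻¹ * latPt ω₁ ω₂ (e p) := by rw [← he]; field_simp
  have he₀ : (e₀ p : ℤ × ℤ) = e p := rfl
  simp only [wzetaTerm, hp, he₀]
  set ω := latPt ω₁ ω₂ (e p)
  rw [show z - c⁻¹ * ω = c⁻¹ * (c * z - ω) by field_simp]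
  simp only [mul_inv, inv_inv, div_eq_mul_inv, mul_pow, inv_pow]
  ring

lemma wzeta_neg (ω₁ ω₂ z : ℂ) : wzeta ω₁ ω₂ (-z) = -wzeta ω₁ ω₂ z := by
  have h : wzeta ω₁ ω₂ z = _ :=
    wzeta_eq_mul_wzeta_mul (neg_ne_zero.mpr one_ne_zero) (AddEquiv.neg (ℤ × ℤ))
      (fun p ↦ by rw [AddEquiv.neg_apply, latPt_neg, neg_one_mul]) z
  rw [h, neg_one_mul, neg_one_mul, neg_neg]

lemma norm_inv_sub_add_inv_add_div_sq_le {z ω : ℂ} (h : 2 * ‖z‖ < ‖ω‖) :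
    ‖1 / (z - ω) + 1 / ω + z / ω ^ 2‖ ≤ 2 * ‖z‖ ^ 2 * ‖ω‖⁻¹ ^ 3 := by
  have hω : 0 < ‖ω‖ := by linarith [norm_nonneg z]
  have hzω : ‖ω‖ / 2 ≤ ‖z - ω‖ := by
    rw [norm_sub_rev]; linarith [norm_sub_norm_le ω z]
  have hzω' : z - ω ≠ 0 := norm_pos_iff.mp (by linarith)
  have hid : 1 / (z - ω) + 1 / ω + z / ω ^ 2 = z ^ 2 / (ω ^ 2 * (z - ω)) := by
    field_simp [norm_pos_iff.mp hω]
    ring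
  rw [hid, norm_div, norm_mul, norm_pow, norm_pow]
  calc ‖z‖ ^ 2 / (‖ω‖ ^ 2 * ‖z - ω‖) ≤ ‖z‖ ^ 2 / (‖ω‖ ^ 2 * (‖ω‖ / 2)) := by gcongr
    _ = 2 * ‖z‖ ^ 2 * ‖ω‖⁻¹ ^ 3 := by field_simp

lemma tsum_inv_latPt_sq_sub_inv_sub_sq (ω₁ ω₂ : ℂ) (e : ℤ × ℤ) :
    ∑' p, (1 / latPt ω₁ ω₂ p ^ 2 - 1 / (latPt ω₁ ω₂ p - latPt ω₁ ω₂ e) ^ 2) = 0 := by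
  set d : ℤ × ℤ → ℂ := fun p ↦
    1 / latPt ω₁ ω₂ p ^ 2 - 1 / (latPt ω₁ ω₂ p - latPt ω₁ ω₂ e) ^ 2
  have hd : ∀ p, d (e - p) = -d p := fun p ↦ by
    simp only [d, latPt_sub]
    ring
  have h := (Equiv.subLeft e).tsum_eq d
  simp only [Equiv.subLeft_apply, hd, tsum_neg] at h
  linear_combination -h / 2

namespace PeriodPair

variable (L : PeriodPair)

lemma latPt_eq_latticeEquivProd_symm (p : ℤ × ℤ) :
    latPt L.ω₁ L.ω₂ p = L.latticeEquivProd.symm p :=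
  (L.latticeEquiv_symm_apply p).symm

lemma summable_norm_latPt_inv_pow : Summable fun p ↦ ‖latPt L.ω₁ L.ω₂ p‖⁻¹ ^ 3 := by
  have hL : Summable fun l : L.lattice ↦ ‖(l : ℂ)‖⁻¹ ^ 3 := by
    simpa only [sub_zero] using ZLattice.summable_norm_sub_inv_pow L.lattice 3 (by simp) 0
  simp only [latPt_eq_latticeEquivProd_symm]
  exact hL.comp_injective L.latticeEquivProd.symm.injective

lemma eventually_lt_norm_latPt (R : ℝ) : ∀ᶠ p in cofinite, R < ‖latPt L.ω₁ L.ω₂ p‖ := by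
  have hL : ∀ᶠ l : L.lattice in cofinite, R < ‖(l : ℂ)‖ := by
    rw [← cocompact_eq_cofinite]
    exact tendsto_norm_cocompact_atTop.eventually_gt_atTop R
  simp only [latPt_eq_latticeEquivProd_symm]
  exact L.latticeEquivProd.symm.injective.tendsto_cofinite.eventually hL

lemma summable_wzetaTerm (z : ℂ) : Summable (wzetaTerm L.ω₁ L.ω₂ z) :=
  .of_norm_bounded_eventually ((L.summable_norm_latPt_inv_pow).mul_left (2 * ‖z‖ ^ 2)) <|
    (L.eventually_lt_norm_latPt (2 * ‖z‖)).mono fun _ ↦ norm_inv_sub_add_inv_add_div_sq_le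

lemma wzeta_eq_tsum (z : ℂ) : wzeta L.ω₁ L.ω₂ z = ∑' p, wzetaTerm L.ω₁ L.ω₂ z p := by
  rw [← (L.summable_wzetaTerm z).tsum_subtype_add_tsum_subtype_compl {0}, tsum_singleton,
    wzetaTerm_zero]
  rfl

lemma wzeta_add_latPt_sub_eq_tsum (e : ℤ × ℤ) (w : ℂ) :
    wzeta L.ω₁ L.ω₂ (w + latPt L.ω₁ L.ω₂ e) - wzeta L.ω₁ L.ω₂ w =
      ∑' p, (wzetaTerm L.ω₁ L.ω₂ (w + latPt L.ω₁ L.ω₂ e) p - wzetaTerm L.ω₁ L.ω₂ w (p - e)) := by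
  rw [L.wzeta_eq_tsum, L.wzeta_eq_tsum, ← (Equiv.subRight e).tsum_eq (wzetaTerm L.ω₁ L.ω₂ w)]
  exact ((L.summable_wzetaTerm _).tsum_sub
    ((Equiv.subRight e).summable_iff.mpr (L.summable_wzetaTerm w))).symm

lemma wzeta_add_latPt_sub_wzeta_eq (e : ℤ × ℤ) (w w' : ℂ) :
    wzeta L.ω₁ L.ω₂ (w + latPt L.ω₁ L.ω₂ e) - wzeta L.ω₁ L.ω₂ w =
      wzeta L.ω₁ L.ω₂ (w' + latPt L.ω₁ L.ω₂ e) - wzeta L.ω₁ L.ω₂ w' := by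
  set η := latPt L.ω₁ L.ω₂ e
  have hsummable : ∀ v, Summable fun p ↦
      wzetaTerm L.ω₁ L.ω₂ (v + η) p - wzetaTerm L.ω₁ L.ω₂ v (p - e) := fun v ↦
    (L.summable_wzetaTerm _).sub ((Equiv.subRight e).summable_iff.mpr (L.summable_wzetaTerm v))
  have hterm : ∀ p, (wzetaTerm L.ω₁ L.ω₂ (w + η) p - wzetaTerm L.ω₁ L.ω₂ w (p - e)) -
      (wzetaTerm L.ω₁ L.ω₂ (w' + η) p - wzetaTerm L.ω₁ L.ω₂ w' (p - e)) =
      (w - w') * (1 / latPt L.ω₁ L.ω₂ p ^ 2 - 1 / (latPt L.ω₁ L.ω₂ p - η) ^ 2) := fun p ↦ by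
    simp only [wzetaTerm, latPt_sub, ← sub_add]
    ring
  rw [L.wzeta_add_latPt_sub_eq_tsum, L.wzeta_add_latPt_sub_eq_tsum, ← sub_eq_zero,
    ← (hsummable w).tsum_sub (hsummable w'), tsum_congr hterm, tsum_mul_left,
    tsum_inv_latPt_sq_sub_inv_sub_sq, mul_zero]

lemma wzeta_add_latPt (e : ℤ × ℤ) (z : ℂ) :
    wzeta L.ω₁ L.ω₂ (z + latPt L.ω₁ L.ω₂ e) =
      wzeta L.ω₁ L.ω₂ z + 2 * wzeta L.ω₁ L.ω₂ (latPt L.ω₁ L.ω₂ e / 2) := by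
  have h := L.wzeta_add_latPt_sub_wzeta_eq e z (-(latPt L.ω₁ L.ω₂ e / 2))
  rw [show -(latPt L.ω₁ L.ω₂ e / 2) + latPt L.ω₁ L.ω₂ e = latPt L.ω₁ L.ω₂ e / 2 by ring,
    wzeta_neg] at h
  linear_combination h

lemma two_mul_wzeta_half_add (e e' : ℤ × ℤ) :
    2 * wzeta L.ω₁ L.ω₂ ((latPt L.ω₁ L.ω₂ e + latPt L.ω₁ L.ω₂ e') / 2) =
      2 * wzeta L.ω₁ L.ω₂ (latPt L.ω₁ L.ω₂ e / 2) +
        2 * wzeta L.ω₁ L.ω₂ (latPt L.ω₁ L.ω₂ e' / 2) := by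
  have h := L.wzeta_add_latPt (e + e') 0
  have h' := L.wzeta_add_latPt e' (latPt L.ω₁ L.ω₂ e)
  have h'' := L.wzeta_add_latPt e 0
  rw [latPt_add, zero_add] at h
  rw [zero_add] at h''
  linear_combination h' + h'' - h

end PeriodPair

lemma linearIndependent_one_of_im_ne_zero {τ : ℂ} (hτ : τ.im ≠ 0) :
    LinearIndependent ℝ ![1, τ] := by
  refine LinearIndependent.pair_iff.mpr fun s t h ↦ ?_
  have him := congrArg Complex.im h
  have hre := congrArg Complex.re h
  simp only [Complex.real_smul, Complex.add_im, Complex.mul_im, Complex.ofReal_re,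
    Complex.ofReal_im, Complex.one_im, Complex.one_re, Complex.zero_im, Complex.add_re,
    Complex.mul_re, Complex.zero_re] at him hre
  have ht : t = 0 := by simpa [hτ] using him
  subst ht
  simpa using hre

lemma wzeta_one_add_one (τ z : ℂ) : wzeta 1 (τ + 1) z = wzeta 1 τ z := by
  let e : ℤ × ℤ ≃+ ℤ × ℤ := AddEquiv.mk'
    ⟨fun p ↦ (p.1 + p.2, p.2), fun p ↦ (p.1 - p.2, p.2), fun _ ↦ by simp, fun _ ↦ by simp⟩
    fun _ _ ↦ Prod.ext (add_add_add_comm ..) rfl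
  have he (p : ℤ × ℤ) : e p = (p.1 + p.2, p.2) := rfl
  have hlat (p : ℤ × ℤ) : 1 * latPt 1 (τ + 1) p = latPt 1 τ (e p) := by
    simp only [latPt, he, mul_one, one_mul, Int.cast_add]
    ring
  simpa using wzeta_eq_mul_wzeta_mul one_ne_zero e hlat z

lemma wzeta_one_neg_inv {τ : ℂ} (hτ : τ ≠ 0) (z : ℂ) :
    wzeta 1 (-1 / τ) z = τ * wzeta 1 τ (τ * z) := by
  let e : ℤ × ℤ ≃+ ℤ × ℤ := AddEquiv.mk'
    ⟨fun p ↦ (-p.2, p.1), fun p ↦ (p.2, -p.1), fun _ ↦ by simp, fun _ ↦ by simp⟩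
    fun _ _ ↦ Prod.ext (neg_add ..) rfl
  have he (p : ℤ × ℤ) : e p = (-p.2, p.1) := rfl
  have hlat (p : ℤ × ℤ) : τ * latPt 1 (-1 / τ) p = latPt 1 τ (e p) := by
    simp only [latPt, he, mul_one, Int.cast_neg]
    field_simp
    ring
  exact wzeta_eq_mul_wzeta_mul hτ e hlat z

lemma eta1_add_one (τ : ℂ) : eta1 (τ + 1) = eta1 τ := by
  rw [eta1, eta1, wzeta_one_add_one]

lemma eta2_add_one {τ : ℂ} (hτ : τ.im ≠ 0) : eta2 (τ + 1) = eta1 τ + eta2 τ := by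
  have h := (PeriodPair.mk 1 τ (linearIndependent_one_of_im_ne_zero hτ)).two_mul_wzeta_half_add
    (1, 0) (0, 1)
  simp only [latPt, Int.cast_one, Int.cast_zero, one_mul, zero_mul, mul_one, add_zero,
    zero_add] at h
  rw [eta2, eta1, eta2, wzeta_one_add_one, add_comm]
  exact h

lemma eta1_neg_inv {τ : ℂ} (hτ : τ ≠ 0) : eta1 (-1 / τ) = τ * eta2 τ := by
  rw [eta1, eta2, wzeta_one_neg_inv hτ, mul_one_div]
  ring

lemma eta2_neg_inv {τ : ℂ} (hτ : τ ≠ 0) : eta2 (-1 / τ) = -(τ * eta1 τ) := by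
  rw [eta1, eta2, wzeta_one_neg_inv hτ, show τ * (-1 / τ / 2) = -(1 / 2) by field_simp,
    wzeta_neg]
  ring

lemma heckeZ_add_one {τ : ℂ} (hτ : τ.im ≠ 0) (r s : ℝ) :
    heckeZ r s (τ + 1) = heckeZ (r + s) s τ := by
  rw [heckeZ, heckeZ, wzeta_one_add_one, eta1_add_one, eta2_add_one hτ, Complex.ofReal_add,
    show (r : ℂ) + s * (τ + 1) = r + s + s * τ by ring]
  ring

lemma heckeZ_neg_inv {τ : ℂ} (hτ : τ ≠ 0) (r s : ℝ) :
    heckeZ r s (-1 / τ) = τ * heckeZ (-s) r τ := by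
  rw [heckeZ, heckeZ, wzeta_one_neg_inv hτ, eta1_neg_inv hτ, eta2_neg_inv hτ,
    show τ * (r + s * (-1 / τ)) = -s + r * τ by field_simp; ring]
  push_cast
  ring

/-- modular transformation of the Hecke function:
`Z_{r,s}(τ+1) = Z_{r+s,s}(τ)` and `Z_{r,s}(−1/τ) = τ Z_{−s,r}(τ)`. -/
theorem stmt12 (τ : ℂ) (hτ : 0 < τ.im) (r s : ℝ) :
    (¬ IsLatticePt 1 τ ((r : ℂ) + (s : ℂ) * τ) →
      heckeZ r s (τ + 1) = heckeZ (r + s) s τ) ∧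
    (¬ IsLatticePt 1 τ (-(s : ℂ) + (r : ℂ) * τ) →
      heckeZ r s (-1 / τ) = τ * heckeZ (-s) r τ) :=
  ⟨fun _ ↦ heckeZ_add_one hτ.ne' r s,
    fun _ ↦ heckeZ_neg_inv (ne_of_apply_ne Complex.im hτ.ne') r s⟩
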